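/- arXiv:2309.16932 — 3 statements merged into one kernel-verified Lean document; each statement's English description precedes it below -/
import Mathlib

section
/- Let ℓ : ℝⁿ → ℝ be twice differentiable and satisfy ℓ(w) = ℓ((I - 2OOᵀ)w) for all w, where OᵀO = I. If w satisfies OOᵀw = 0, then the Hessian H = ∇²ℓ(w) commutes with the projection P = OOᵀ; equivalently, H maps ker(Oᵀ) into ker(Oᵀ) and im(OOᵀ) into im(OOᵀ). -/
open Matrix

/-- At a symmetric solution, the Hessian commutes with the projection `P = O * Oᵀ`,
    i.e. it maps `ker Oᵀ` into `ker Oᵀ` and `im (O * Oᵀ)` into `im (O * Oᵀ)`. -/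
theorem stmt1 {n k : ℕ} (O : Matrix (Fin n) (Fin k) ℝ)
    (hO : Oᵀ * O = 1)
    (ℓ : (Fin n → ℝ) → ℝ) (hsmooth : ContDiff ℝ 2 ℓ)
    (hsym : ∀ w : Fin n → ℝ, ℓ w = ℓ ((1 - (2 : ℝ) • (O * Oᵀ)).mulVec w))
    (w : Fin n → ℝ) (hw : (O * Oᵀ).mulVec w = 0)
    (H : Matrix (Fin n) (Fin n) ℝ)
    (hH : ∀ i j, H i j =
      fderiv ℝ (fun v => fderiv ℝ ℓ v (Pi.single j 1)) w (Pi.single i 1)) :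
    H * (O * Oᵀ) = (O * Oᵀ) * H := by
  set P : Matrix (Fin n) (Fin n) ℝ := O * Oᵀ with hP
  set R : Matrix (Fin n) (Fin n) ℝ := 1 - (2 : ℝ) • P with hR
  -- basic matrix facts
  have hPP : P * P = P := by
    rw [hP, Matrix.mul_assoc, ← Matrix.mul_assoc Oᵀ, hO, Matrix.one_mul]
  have hPT : Pᵀ = P := by rw [hP, Matrix.transpose_mul, Matrix.transpose_transpose]
  have hRT : Rᵀ = R := by
    rw [hR, Matrix.transpose_sub, Matrix.transpose_smul, hPT, Matrix.transpose_one]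
  have hRR : R * R = 1 := by
    rw [hR, two_smul]
    simp only [Matrix.sub_mul, Matrix.mul_sub, Matrix.add_mul, Matrix.mul_add,
      Matrix.one_mul, Matrix.mul_one, hPP]
    abel
  -- the reflection as a continuous linear map
  let L : (Fin n → ℝ) →L[ℝ] (Fin n → ℝ) := (Matrix.mulVecLin R).toContinuousLinearMap
  have hLapp : ∀ v, L v = R.mulVec v := fun v => rfl
  have hLw : L w = w := by
    rw [hLapp, hR, Matrix.sub_mulVec, Matrix.one_mulVec, Matrix.smul_mulVec, hw]
    simp
  -- differentiability facts
  have hℓd : Differentiable ℝ ℓ := hsmooth.differentiable (by norm_num)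
  have hfd1 : ContDiff ℝ 1 (fderiv ℝ ℓ) := hsmooth.fderiv_right (by norm_num)
  have hfd : Differentiable ℝ (fderiv ℝ ℓ) := hfd1.differentiable (by norm_num)
  -- chain rule: first derivative
  have hcomp : ℓ = fun v => ℓ (L v) := by
    funext v; rw [hLapp]; exact hsym v
  have h1 : ∀ v, fderiv ℝ ℓ v = (fderiv ℝ ℓ (L v)).comp L := by
    intro v
    conv_lhs => rw [hcomp]
    have := fderiv_comp (𝕜 := ℝ) v (hℓd (L v)) L.differentiableAt
    rw [L.fderiv] at this
    exact this
  -- second derivative as a bilinear form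
  set B : (Fin n → ℝ) →L[ℝ] (Fin n → ℝ) →L[ℝ] ℝ := fderiv ℝ (fderiv ℝ ℓ) w with hB
  have hFB : ∀ (u x : Fin n → ℝ),
      fderiv ℝ (fun v => fderiv ℝ ℓ v u) w x = B x u := by
    intro u x
    have h := fderiv_clm_apply (c := fderiv ℝ ℓ) (u := fun _ => u)
      (hfd w) (differentiableAt_const u)
    simp only [fderiv_fun_const] at h
    rw [h]
    simp
    rfl
  have hFdiff : ∀ (b : Fin n → ℝ), Differentiable ℝ (fun v => fderiv ℝ ℓ v b) := by
    intro b
    exact (ContinuousLinearMap.apply ℝ ℝ b).differentiable.comp hfd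
  -- invariance of the second derivative under the reflection
  have hinv : ∀ (u x : Fin n → ℝ), B x u = B (L x) (L u) := by
    intro u x
    rw [← hFB u x]
    have heq : (fun v => fderiv ℝ ℓ v u) = (fun v => fderiv ℝ ℓ v (L u)) ∘ L := by
      funext v
      simp only [Function.comp_apply]
      rw [h1 v]
      rfl
    rw [heq]
    have h2 := fderiv_comp (𝕜 := ℝ) w (hFdiff (L u) (L w)) L.differentiableAt
    rw [L.fderiv, hLw] at h2
    rw [h2]
    simp only [ContinuousLinearMap.comp_apply]
    exact hFB (L u) (L x)
  -- H entries as values of B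
  have hHB : ∀ i j, H i j = B (Pi.single i 1) (Pi.single j 1) := by
    intro i j
    rw [hH i j, hFB]
  -- bilinear expansion
  have hBsum : ∀ x y : Fin n → ℝ,
      B x y = ∑ a, ∑ b, x a * y b * B (Pi.single a 1) (Pi.single b 1) := by
    intro x y
    have hx : x = ∑ a, x a • (Pi.single a 1 : Fin n → ℝ) := by
      funext c
      simp [Finset.sum_apply, Pi.single_apply]
    have hy : y = ∑ b, y b • (Pi.single b 1 : Fin n → ℝ) := by
      funext c
      simp [Finset.sum_apply, Pi.single_apply]
    conv_lhs => rw [hx, hy]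
    simp only [map_sum, ContinuousLinearMap.sum_apply]
    rw [Finset.sum_comm]
    refine Finset.sum_congr rfl fun a _ => Finset.sum_congr rfl fun b _ => ?_
    rw [B.map_smul, ContinuousLinearMap.smul_apply, (B _).map_smul, smul_eq_mul, smul_eq_mul]
    ring
  -- columns of R
  have hLe : ∀ i, L (Pi.single i 1) = fun a => R a i := by
    intro i
    funext a
    rw [hLapp, Matrix.mulVec_single]
    simp
  -- key identity: H = R * H * R  (using Rᵀ = R)
  have hRsym : ∀ a i, R a i = R i a := by
    intro a i
    exact congrFun (congrFun hRT i) a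
  have hkey : H = R * H * R := by
    ext i j
    rw [hHB i j, hinv, hLe, hLe, hBsum]
    rw [Matrix.mul_apply]
    rw [Finset.sum_comm]
    refine Finset.sum_congr rfl fun b _ => ?_
    rw [Matrix.mul_apply, Finset.sum_mul]
    refine Finset.sum_congr rfl fun a _ => ?_
    rw [← hHB a b, hRsym a i]
    ring
  have hcomm : H * R = R * H := by
    calc H * R = (R * H * R) * R := by rw [← hkey]
    _ = R * H * (R * R) := by rw [Matrix.mul_assoc]
    _ = R * H := by rw [hRR, Matrix.mul_one]
  rw [hR, Matrix.mul_sub, Matrix.sub_mul, Matrix.mul_one, Matrix.one_mul,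
    Matrix.mul_smul, Matrix.smul_mul] at hcomm
  have h2 : (2 : ℝ) • (H * P) = (2 : ℝ) • (P * H) := sub_right_injective hcomm
  exact smul_right_injective _ (two_ne_zero) h2
end

section
/- Let ℓ₀ : ℝⁿ → ℝ be twice differentiable with all Hessian eigenvalues bounded below by λ_min, and suppose ℓ₀(w) = ℓ₀((I - 2OOᵀ)w) for all w, where OᵀO = I. Then there exists γ₁ (e.g. γ₁ = -λ_min/2 suffices so that ℓ_γ is strictly convex) such that for all γ > γ₁, every minimizer w* of ℓ_γ(w) = ℓ₀(w) + γ‖w‖² satisfies Oᵀw* = 0. -/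
open Matrix

/-- With mirror symmetry and Hessian eigenvalues bounded below, for sufficiently
    large weight decay every minimizer of the regularized loss is a symmetric
    solution: `Oᵀ w* = 0`. -/
theorem stmt3 {n k : ℕ} (O : Matrix (Fin n) (Fin k) ℝ)
    (hO : Oᵀ * O = 1)
    (ℓ0 : (Fin n → ℝ) → ℝ) (hsmooth : ContDiff ℝ 2 ℓ0)
    (lamMin : ℝ)
    (hHess : ∀ w v : Fin n → ℝ,
      lamMin * ∑ i, (v i) ^ 2 ≤
        fderiv ℝ (fun u => fderiv ℝ ℓ0 u v) w v)
    (hsym : ∀ w : Fin n → ℝ, ℓ0 w = ℓ0 ((1 - (2 : ℝ) • (O * Oᵀ)).mulVec w)) :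
    ∃ γ1 : ℝ, ∀ γ > γ1, ∀ wstar : Fin n → ℝ,
      (∀ u : Fin n → ℝ,
        ℓ0 wstar + γ * ∑ i, (wstar i) ^ 2 ≤ ℓ0 u + γ * ∑ i, (u i) ^ 2) →
      Oᵀ.mulVec wstar = 0 := by
  set S : Matrix (Fin n) (Fin n) ℝ := 1 - (2 : ℝ) • (O * Oᵀ) with hSdef
  have hA : (O * Oᵀ) * (O * Oᵀ) = O * Oᵀ := by
    rw [Matrix.mul_assoc, ← Matrix.mul_assoc Oᵀ, hO, Matrix.one_mul]
  have hS2 : S * S = 1 := by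
    simp only [hSdef, sub_mul, mul_sub, one_mul, mul_one, Matrix.smul_mul, Matrix.mul_smul,
      hA, smul_smul]
    norm_num
    module
  have hSs : Sᵀ = S := by
    simp [hSdef, Matrix.transpose_sub, Matrix.transpose_smul, Matrix.transpose_mul]
  -- differentiability facts
  have hℓd : Differentiable ℝ ℓ0 := hsmooth.differentiable (by norm_num)
  have hFd : ∀ d : Fin n → ℝ, Differentiable ℝ (fun u => fderiv ℝ ℓ0 u d) := by
    intro d
    have hF : ContDiff ℝ 1 (fderiv ℝ ℓ0) := hsmooth.fderiv_right (by norm_num)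
    exact ((ContinuousLinearMap.apply ℝ ℝ d).contDiff.comp hF).differentiable (by norm_num)
  refine ⟨-lamMin / 2, ?_⟩
  intro γ hγ w hmin
  have hc : 0 < lamMin + 2 * γ := by
    have : -lamMin / 2 < γ := hγ
    linarith
  set d : Fin n → ℝ := S.mulVec w - w with hddef
  have hd0 : d = 0 := by
    by_contra hd
    have hsumd : 0 < ∑ i, d i ^ 2 := by
      rcases Function.ne_iff.mp hd with ⟨i, hi⟩
      have hi' : d i ≠ 0 := by simpa using hi
      have : (0 : ℝ) < d i ^ 2 := by positivity
      exact this.trans_le (Finset.single_le_sum (fun j _ => sq_nonneg (d j)) (Finset.mem_univ i))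
    set φ : ℝ → (Fin n → ℝ) := fun t => fun i => w i + t * d i with hφdef
    have hφ : ∀ t, HasDerivAt φ d t := by
      intro t
      rw [hasDerivAt_pi]
      exact fun i => (hasDerivAt_mul_const (d i)).const_add (w i)
    set g : ℝ → ℝ := fun t => ℓ0 (φ t) + γ * ∑ i, (φ t i) ^ 2 with hgdef
    set g' : ℝ → ℝ := fun t => fderiv ℝ ℓ0 (φ t) d + γ * ∑ i, 2 * (φ t i) * d i with hg'def
    have hg' : ∀ t, HasDerivAt g (g' t) t := by
      intro t
      refine HasDerivAt.add ?_ ?_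
      · exact (hℓd (φ t)).hasFDerivAt.comp_hasDerivAt t (hφ t)
      · refine HasDerivAt.const_mul γ (HasDerivAt.fun_sum fun i _ => ?_)
        have h1 : HasDerivAt (fun t : ℝ => w i + t * d i) (d i) t :=
          (hasDerivAt_mul_const (d i)).const_add (w i)
        simpa using h1.fun_pow 2
    have hderivg : deriv g = g' := funext fun t => (hg' t).deriv
    have hg'' : ∀ t, HasDerivAt g'
        (fderiv ℝ (fun u => fderiv ℝ ℓ0 u d) (φ t) d + γ * ∑ i, 2 * d i * d i) t := by
      intro t
      refine HasDerivAt.add ?_ ?_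
      · exact ((hFd d) (φ t)).hasFDerivAt.comp_hasDerivAt t (hφ t)
      · refine HasDerivAt.const_mul γ (HasDerivAt.fun_sum fun i _ => ?_)
        have h1 : HasDerivAt (fun t : ℝ => w i + t * d i) (d i) t :=
          (hasDerivAt_mul_const (d i)).const_add (w i)
        simpa [mul_assoc] using (h1.const_mul 2).mul_const (d i)
    have hpos : ∀ t, 0 < deriv (deriv g) t := by
      intro t
      rw [hderivg, (hg'' t).deriv]
      have h1 := hHess (φ t) d
      have h2 : γ * ∑ i, 2 * d i * d i = 2 * γ * ∑ i, d i ^ 2 := by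
        rw [Finset.mul_sum, Finset.mul_sum]
        congr 1; funext i; ring
      calc (0:ℝ) < (lamMin + 2 * γ) * ∑ i, d i ^ 2 := by positivity
        _ = lamMin * ∑ i, d i ^ 2 + 2 * γ * ∑ i, d i ^ 2 := by ring
        _ ≤ _ := by rw [h2]; exact add_le_add_left h1 _
    have hgc : Continuous g := by
      have : Differentiable ℝ g := fun t => (hg' t).differentiableAt
      exact this.continuous
    have hconv : StrictConvexOn ℝ Set.univ g := by
      apply strictConvexOn_of_deriv2_pos convex_univ hgc.continuousOn
      intro x _
      simpa using hpos x
    have hφ0 : φ 0 = w := by funext i; simp [hφdef]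
    have hφ1 : φ 1 = S.mulVec w := by funext i; simp [hφdef, hddef]
    have hnorm : ∑ i, (S.mulVec w i) ^ 2 = ∑ i, (w i) ^ 2 := by
      have h1 : S.vecMul w = S.mulVec w := by rw [← hSs, Matrix.mulVec_transpose, hSs]
      have h2 : S.mulVec w ⬝ᵥ S.mulVec w = w ⬝ᵥ w := by
        rw [show S.mulVec w ⬝ᵥ S.mulVec w = (S.vecMul w) ⬝ᵥ (S.mulVec w) from by rw [h1],
          ← Matrix.dotProduct_mulVec, Matrix.mulVec_mulVec, hS2, Matrix.one_mulVec]
      simpa [dotProduct, sq] using h2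
    have hg01 : g 0 = g 1 := by
      rw [hgdef]
      simp only [hφ0, hφ1, hnorm]
      rw [← hsym w]
    have hlt : g (1/2 : ℝ) < g 0 := by
      have h := hconv.2 (Set.mem_univ (0:ℝ)) (Set.mem_univ (1:ℝ)) (by norm_num)
        (by norm_num : (0:ℝ) < 1/2) (by norm_num : (0:ℝ) < 1/2) (by norm_num)
      simp only [smul_eq_mul, mul_zero, mul_one, zero_add] at h
      calc g (1/2 : ℝ) = g ((1:ℝ)/2 * 1) := by norm_num
        _ < 1/2 * g 0 + 1/2 * g 1 := by simpa using h
        _ = g 0 := by rw [← hg01]; ring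
    have hle : g 0 ≤ g (1/2 : ℝ) := by
      have := hmin (φ (1/2 : ℝ))
      rw [hgdef]; simp only [hφ0]
      exact this
    linarith
  -- from d = 0 conclude
  have hfix : S.mulVec w = w := by
    have := sub_eq_zero.mp hd0
    exact this
  have hOOw : (O * Oᵀ).mulVec w = 0 := by
    have h1 : w - (2 : ℝ) • ((O * Oᵀ).mulVec w) = w := by
      calc w - (2 : ℝ) • ((O * Oᵀ).mulVec w) = S.mulVec w := by
            rw [hSdef, Matrix.sub_mulVec, Matrix.one_mulVec, Matrix.smul_mulVec]
        _ = w := hfix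
    have h2 : (2 : ℝ) • ((O * Oᵀ).mulVec w) = 0 := by
      have := sub_eq_self.mp h1
      exact this
    have := smul_eq_zero.mp h2
    rcases this with h | h
    · norm_num at h
    · exact h
  have : Oᵀ.mulVec ((O * Oᵀ).mulVec w) = Oᵀ.mulVec w := by
    rw [Matrix.mulVec_mulVec, ← Matrix.mul_assoc, hO, Matrix.one_mul]
  rw [hOOw] at this
  rw [← this]
  simp [Matrix.mulVec_zero]
end

section
/- Let ℓ₀ : ℝ^{n×m} → ℝ be differentiable and satisfy ℓ₀(ΩW) = ℓ₀(W) for every orthogonal matrix Ω ∈ O(n). If n ∈ ℝⁿ is a unit vector with nᵀW = 0, then nᵀ∇_W ℓ₀(W) = 0, i.e., the gradient matrix has n in its left null space. -/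
open Matrix
attribute [local instance] Matrix.normedAddCommGroup Matrix.normedSpace

/-- Left rotation invariance implies that at any `W` with `nᵀ W = 0`, the vector
    `n` lies in the left null space of the gradient matrix. -/
theorem stmt7 {n m : ℕ}
    (ℓ0 : Matrix (Fin n) (Fin m) ℝ → ℝ) (hdiff : Differentiable ℝ ℓ0)
    (hsym : ∀ Ω : Matrix (Fin n) (Fin n) ℝ, Ω * Ωᵀ = 1 →
      ∀ W : Matrix (Fin n) (Fin m) ℝ, ℓ0 (Ω * W) = ℓ0 W)
    (v : Fin n → ℝ) (hunit : ∑ i, (v i) ^ 2 = 1)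
    (W : Matrix (Fin n) (Fin m) ℝ) (hvW : Matrix.vecMul v W = 0) :
    Matrix.vecMul v
      (fun i j => fderiv ℝ ℓ0 W (Matrix.single i j 1)) = 0 := by
  classical
  set P : Matrix (Fin n) (Fin n) ℝ := vecMulVec v v with hPdef
  set Ω : Matrix (Fin n) (Fin n) ℝ := 1 - (2:ℝ) • P with hΩdef
  -- P is idempotent
  have hPP : P * P = P := by
    ext i k
    simp only [hPdef, Matrix.mul_apply, vecMulVec_apply]
    calc ∑ l, (v i * v l) * (v l * v k)
        = (v i * v k) * ∑ l, (v l) ^ 2 := by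
          rw [Finset.mul_sum]; exact Finset.sum_congr rfl fun l _ => by ring
      _ = v i * v k := by rw [hunit, mul_one]
  have hPsymm : Pᵀ = P := by
    ext i k; simp [hPdef, vecMulVec_apply, mul_comm]
  have hΩsymm : Ωᵀ = Ω := by
    simp [hΩdef, transpose_sub, transpose_smul, hPsymm]
  have hOrth : Ω * Ωᵀ = 1 := by
    rw [hΩsymm, hΩdef]
    simp only [Matrix.sub_mul, Matrix.mul_sub, Matrix.smul_mul, Matrix.mul_smul,
      hPP, one_mul, mul_one, smul_smul]
    module
  -- P kills W on the left
  have hvW' : ∀ j, ∑ k, v k * W k j = 0 := by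
    intro j
    have := congrFun hvW j
    simpa [Matrix.vecMul, dotProduct] using this
  have hPW : P * W = 0 := by
    ext i j
    simp only [hPdef, Matrix.mul_apply, vecMulVec_apply, Matrix.zero_apply, mul_assoc,
      ← Finset.mul_sum]
    rw [hvW' j, mul_zero]
  have hΩW : Ω * W = W := by
    rw [hΩdef, Matrix.sub_mul, Matrix.one_mul, Matrix.smul_mul, hPW, smul_zero, sub_zero]
  -- left multiplication by Ω as a continuous linear map
  let L : Matrix (Fin n) (Fin m) ℝ →L[ℝ] Matrix (Fin n) (Fin m) ℝ :=
    LinearMap.toContinuousLinearMap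
      { toFun := fun X => Ω * X
        map_add' := fun X Y => Matrix.mul_add _ _ _
        map_smul' := fun c X => Matrix.mul_smul _ _ _ }
  have hLW : L W = W := hΩW
  set D := fderiv ℝ ℓ0 W with hDdef
  have hfd : HasFDerivAt (fun X => ℓ0 (L X)) (D.comp L) W := by
    have h1 : HasFDerivAt ℓ0 D (L W) := by rw [hLW]; exact (hdiff W).hasFDerivAt
    exact h1.comp W L.hasFDerivAt
  have hfun : (fun X => ℓ0 (L X)) = ℓ0 := funext fun X => hsym Ω hOrth X
  rw [hfun] at hfd
  have huniq : D.comp L = D := hfd.unique (hdiff W).hasFDerivAt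
  have hkey : ∀ U, D (Ω * U) = D U := by
    intro U
    have := congrFun (congrArg DFunLike.coe huniq) U
    exact this
  -- conclude
  funext j
  set M : Matrix (Fin n) (Fin m) ℝ := vecMulVec v (fun k => if k = j then 1 else 0) with hMdef
  have hPM : P * M = M := by
    ext i k
    simp only [hPdef, hMdef, Matrix.mul_apply, vecMulVec_apply]
    calc ∑ l, (v i * v l) * (v l * (if k = j then 1 else 0))
        = (v i * (if k = j then 1 else 0)) * ∑ l, (v l) ^ 2 := by
          rw [Finset.mul_sum]; exact Finset.sum_congr rfl fun l _ => by ring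
      _ = v i * (if k = j then (1:ℝ) else 0) := by rw [hunit, mul_one]
  have hΩM : Ω * M = -M := by
    rw [hΩdef, Matrix.sub_mul, Matrix.one_mul, Matrix.smul_mul, hPM, two_smul]
    abel
  have hDM : D M = 0 := by
    have h1 : D (Ω * M) = D M := hkey M
    rw [hΩM, map_neg] at h1
    linarith
  have hMsum : M = ∑ i, v i • Matrix.single i j 1 := by
    ext i' k
    have hterm : ∀ i : Fin n, (v i • Matrix.single i j 1) i' k
        = if i = i' then (if j = k then v i else 0) else 0 := by
      intro i
      simp [Matrix.single, ite_and, smul_ite]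
    rw [Matrix.sum_apply]
    simp only [hterm, Finset.sum_ite_eq', Finset.mem_univ, if_true]
    by_cases h : k = j <;> simp [hMdef, vecMulVec_apply, h, eq_comm]
  have hsum : ∑ i, v i * D (Matrix.single i j 1) = 0 := by
    rw [← hDM, hMsum, map_sum]
    exact Finset.sum_congr rfl fun i _ => by rw [D.map_smul, smul_eq_mul]
  simpa [Matrix.vecMul, dotProduct] using hsum
end
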